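/- arXiv:2109.12981 — 9 statements merged into one kernel-verified Lean document; each statement's English description precedes it below -/
import Mathlib

section
/- Let 0 → X →f E →g Z → 0 be an almost split sequence of finitely generated right A-modules. Then this sequence is perfect exact if and only if X is not projective. -/
/-- `0 → X → Y → Z → 0` is a short exact sequence of right `A`-modules
(right `A`-modules are modules over `Aᵐᵒᵖ`). -/
def IsShortExactSeq (A : Type) [Ring A] {X Y Z : Type}
    [AddCommGroup X] [AddCommGroup Y] [AddCommGroup Z]
    [Module Aᵐᵒᵖ X] [Module Aᵐᵒᵖ Y] [Module Aᵐᵒᵖ Z]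
    (f : X →ₗ[Aᵐᵒᵖ] Y) (g : Y →ₗ[Aᵐᵒᵖ] Z) : Prop :=
  Function.Injective f ∧ Function.Exact f g ∧ Function.Surjective g

/-- A short exact sequence `0 → X → Y → Z → 0` of right `A`-modules is perfect exact
if the induced sequence `0 → Hom_A(Z,A) → Hom_A(Y,A) → Hom_A(X,A) → 0` is exact. -/
def IsPerfectExactSeq (A : Type) [Ring A] {X Y Z : Type}
    [AddCommGroup X] [AddCommGroup Y] [AddCommGroup Z]
    [Module Aᵐᵒᵖ X] [Module Aᵐᵒᵖ Y] [Module Aᵐᵒᵖ Z]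
    (f : X →ₗ[Aᵐᵒᵖ] Y) (g : Y →ₗ[Aᵐᵒᵖ] Z) : Prop :=
  IsShortExactSeq A f g ∧
  Function.Injective (fun φ : Z →ₗ[Aᵐᵒᵖ] A => φ.comp g) ∧
  Function.Exact (fun φ : Z →ₗ[Aᵐᵒᵖ] A => φ.comp g) (fun φ : Y →ₗ[Aᵐᵒᵖ] A => φ.comp f) ∧
  Function.Surjective (fun φ : Y →ₗ[Aᵐᵒᵖ] A => φ.comp f)

/-- `0 → X → E → Z → 0` is an almost split sequence of (finitely generated) right
`A`-modules: it is a non-split short exact sequence, `X` and `Z` are indecomposable,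
`f` is left almost split and `g` is right almost split. -/
def IsAlmostSplitSeq (A : Type) [Ring A] {X E Z : Type}
    [AddCommGroup X] [AddCommGroup E] [AddCommGroup Z]
    [Module Aᵐᵒᵖ X] [Module Aᵐᵒᵖ E] [Module Aᵐᵒᵖ Z]
    (f : X →ₗ[Aᵐᵒᵖ] E) (g : E →ₗ[Aᵐᵒᵖ] Z) : Prop :=
  IsShortExactSeq A f g ∧
  -- the sequence does not split
  (¬ ∃ s : Z →ₗ[Aᵐᵒᵖ] E, g.comp s = LinearMap.id) ∧
  -- `X` is indecomposable
  (Nontrivial X ∧ ∀ N N' : Submodule Aᵐᵒᵖ X, IsCompl N N' → N = ⊥ ∨ N' = ⊥) ∧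
  -- `Z` is indecomposable
  (Nontrivial Z ∧ ∀ N N' : Submodule Aᵐᵒᵖ Z, IsCompl N N' → N = ⊥ ∨ N' = ⊥) ∧
  -- `f` is left almost split: every `u : X → W` which is not a split monomorphism
  -- factors through `f`
  (∀ (W : Type) [AddCommGroup W] [Module Aᵐᵒᵖ W] [Module.Finite Aᵐᵒᵖ W]
    (u : X →ₗ[Aᵐᵒᵖ] W), (¬ ∃ r : W →ₗ[Aᵐᵒᵖ] X, r.comp u = LinearMap.id) →
      ∃ h : E →ₗ[Aᵐᵒᵖ] W, h.comp f = u) ∧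
  -- `g` is right almost split: every `u : W → Z` which is not a split epimorphism
  -- factors through `g`
  (∀ (W : Type) [AddCommGroup W] [Module Aᵐᵒᵖ W] [Module.Finite Aᵐᵒᵖ W]
    (u : W →ₗ[Aᵐᵒᵖ] Z), (¬ ∃ s : Z →ₗ[Aᵐᵒᵖ] W, u.comp s = LinearMap.id) →
      ∃ h : W →ₗ[Aᵐᵒᵖ] E, g.comp h = u)

/-!
Since `Hom_A(-, A)` is left exact, a short exact sequence is perfect exact as soon as every map
`X → A` extends along `f`. If `X` is not projective, no map `X → A` is a split
monomorphism (it would make `X` a summand of `A`), so each one factors through the left almost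
split map `f`. Conversely, if `X` is projective and finitely generated it is a retract of some
`Aⁿ`; extending the coordinates of the embedding `X → Aⁿ` along `f` yields a retraction of `f`,
so the sequence would split.
-/

open LinearMap

instance MulOpposite.moduleFinite_self (A : Type*) [Semiring A] : Module.Finite Aᵐᵒᵖ A :=
  .equiv (MulOpposite.opLinearEquiv Aᵐᵒᵖ).symm

instance MulOpposite.moduleProjective_self (A : Type*) [Semiring A] : Module.Projective Aᵐᵒᵖ A :=
  .of_equiv (MulOpposite.opLinearEquiv Aᵐᵒᵖ).symm

section Ring

variable {R X Y Z P Q : Type*} [Ring R] [AddCommGroup X] [AddCommGroup Y] [AddCommGroup Z]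
  [AddCommGroup P] [AddCommGroup Q] [Module R X] [Module R Y] [Module R Z] [Module R P]
  [Module R Q]

theorem Function.Exact.linearMapComp_right {f : X →ₗ[R] Y} {g : Y →ₗ[R] Z}
    (h : Function.Exact f g) (hg : Function.Surjective g) :
    Function.Exact (fun φ : Z →ₗ[R] P => φ ∘ₗ g) (fun φ : Y →ₗ[R] P => φ ∘ₗ f) := by
  intro ψ
  refine ⟨fun hψ => ?_, ?_⟩
  · refine ⟨(range f).liftQ ψ (range_le_ker_iff.mpr hψ) ∘ₗ
      (h.linearEquivOfSurjective hg).symm.toLinearMap, ?_⟩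
    ext y
    simp
  · rintro ⟨φ, rfl⟩
    dsimp only
    rw [LinearMap.comp_assoc, h.linearMap_comp_eq_zero, comp_zero]

theorem LinearEquiv.surjective_linearMapComp_right {f : X →ₗ[R] Y} (e : P ≃ₗ[R] Q)
    (hf : Function.Surjective fun φ : Y →ₗ[R] P => φ ∘ₗ f) :
    Function.Surjective fun φ : Y →ₗ[R] Q => φ ∘ₗ f := by
  intro φ
  obtain ⟨ψ, hψ⟩ := hf (e.symm.toLinearMap ∘ₗ φ)
  refine ⟨e.toLinearMap ∘ₗ ψ, ?_⟩
  dsimp only at hψ ⊢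
  rw [LinearMap.comp_assoc, hψ, ← LinearMap.comp_assoc, e.comp_symm, id_comp]

theorem exists_retraction_of_surjective_linearMapComp_right [Module.Finite R X]
    [Module.Projective R X] {f : X →ₗ[R] Y}
    (hf : Function.Surjective fun φ : Y →ₗ[R] R => φ ∘ₗ f) :
    ∃ r : Y →ₗ[R] X, r ∘ₗ f = LinearMap.id := by
  obtain ⟨n, π, ι, -, -, hπι⟩ := Module.Finite.exists_comp_eq_id_of_projective R X
  choose ψ hψ using fun i : Fin n => hf (proj i ∘ₗ ι)
  refine ⟨π ∘ₗ pi ψ, ?_⟩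
  rw [LinearMap.comp_assoc, pi_comp, funext hψ, pi_proj_comp, hπι]

end Ring

section Sequences

variable {A : Type} [Ring A] {X Y Z : Type} [AddCommGroup X] [AddCommGroup Y] [AddCommGroup Z]
  [Module Aᵐᵒᵖ X] [Module Aᵐᵒᵖ Y] [Module Aᵐᵒᵖ Z] {f : X →ₗ[Aᵐᵒᵖ] Y} {g : Y →ₗ[Aᵐᵒᵖ] Z}

theorem IsShortExactSeq.isPerfectExactSeq_iff (h : IsShortExactSeq A f g) :
    IsPerfectExactSeq A f g ↔ Function.Surjective fun φ : Y →ₗ[Aᵐᵒᵖ] A => φ ∘ₗ f :=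
  ⟨fun ⟨_, _, _, hf⟩ => hf, fun hf =>
    ⟨h, h.2.2.injective_linearMapComp_right, h.2.1.linearMapComp_right h.2.2, hf⟩⟩

theorem IsAlmostSplitSeq.not_exists_retraction (h : IsAlmostSplitSeq A f g) :
    ¬ ∃ r : Y →ₗ[Aᵐᵒᵖ] X, r ∘ₗ f = LinearMap.id := by
  obtain ⟨⟨hf, hfg, hg⟩, hnonsplit, -⟩ := h
  exact fun hr => hnonsplit (((hfg.split_tfae hf hg).out 0 1).mpr hr)

theorem IsAlmostSplitSeq.surjective_linearMapComp_right (h : IsAlmostSplitSeq A f g)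
    (hX : ¬ Module.Projective Aᵐᵒᵖ X) : Function.Surjective fun φ : Y →ₗ[Aᵐᵒᵖ] A => φ ∘ₗ f := by
  obtain ⟨-, -, -, -, hleft, -⟩ := h
  exact fun φ => hleft A φ fun ⟨r, hr⟩ => hX (.of_split φ r hr)

end Sequences

theorem almostSplitSeq_isPerfectExactSeq_iff_not_projective_general
    (A : Type) [Ring A]
    (X E Z : Type) [AddCommGroup X] [AddCommGroup E] [AddCommGroup Z]
    [Module Aᵐᵒᵖ X] [Module Aᵐᵒᵖ E] [Module Aᵐᵒᵖ Z]
    [Module.Finite Aᵐᵒᵖ X]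
    (f : X →ₗ[Aᵐᵒᵖ] E) (g : E →ₗ[Aᵐᵒᵖ] Z)
    (hass : IsAlmostSplitSeq A f g) :
    IsPerfectExactSeq A f g ↔ ¬ Module.Projective Aᵐᵒᵖ X := by
  rw [hass.1.isPerfectExactSeq_iff]
  refine ⟨fun hf hX => hass.not_exists_retraction ?_, hass.surjective_linearMapComp_right⟩
  exact exists_retraction_of_surjective_linearMapComp_right
    ((MulOpposite.opLinearEquiv Aᵐᵒᵖ).surjective_linearMapComp_right hf)

/-- An almost split sequence `0 → X → E → Z → 0` of finitely generated right `A`-modules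
over a finite dimensional `k`-algebra `A` is perfect exact if and only if `X` is not
projective. -/
theorem almostSplitSeq_isPerfectExactSeq_iff_not_projective
    (k A : Type) [Field k] [Ring A] [Algebra k A] [FiniteDimensional k A]
    (X E Z : Type) [AddCommGroup X] [AddCommGroup E] [AddCommGroup Z]
    [Module Aᵐᵒᵖ X] [Module Aᵐᵒᵖ E] [Module Aᵐᵒᵖ Z]
    [Module.Finite Aᵐᵒᵖ X] [Module.Finite Aᵐᵒᵖ E] [Module.Finite Aᵐᵒᵖ Z]
    (f : X →ₗ[Aᵐᵒᵖ] E) (g : E →ₗ[Aᵐᵒᵖ] Z)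
    (hass : IsAlmostSplitSeq A f g) :
    IsPerfectExactSeq A f g ↔ ¬ Module.Projective Aᵐᵒᵖ X :=
  almostSplitSeq_isPerfectExactSeq_iff_not_projective_general A X E Z f g hass
end

section
/- Assume that there exists a finitely generated right A-module Q that is both projective and injective together with an injective A-linear map A → Q (i.e., the dominant dimension of A is at least 1). Let Y be a finitely generated right A-module such that Hom_A(Y,Z) = 0 for every finitely generated right A-module Z that is both projective and injective, and let Y' be a submodule of Y. Then Hom_A(Y',A) = 0, and every short exact sequence 0 → X → Y' → Z → 0 of finitely generated right A-modules with middle term Y' is perfect exact. -/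
/-! Every module `X` embedding into `Y` has `Hom_A(X, A) = 0`: a map `ψ : X → A`, composed with
`A ↪ Q`, extends along `X ↪ Y` because `Q` is injective, and that extension `Y → Q` vanishes.
This applies to `Y'` and to `X ↪ Y' ↪ Y`; once `Hom_A(Y', A)` and `Hom_A(X, A)` vanish, the
dualized sequence consists of zero maps between zero groups. -/

universe u v w

theorem LinearMap.eq_zero_of_forall_hom_to_injective_eq_zero {R : Type u} [Ring R]
    {M : Type w} {Q X Y : Type v} [AddCommGroup M] [AddCommGroup Q] [AddCommGroup X]
    [AddCommGroup Y] [Module R M] [Module R Q] [Module R X] [Module R Y] [Module.Injective R Q]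
    (i : M →ₗ[R] Q) (hi : Function.Injective i) (hY : ∀ φ : Y →ₗ[R] Q, φ = 0)
    (j : X →ₗ[R] Y) (hj : Function.Injective j) (ψ : X →ₗ[R] M) : ψ = 0 := by
  obtain ⟨h, hh⟩ := Module.Injective.out j hj (i ∘ₗ ψ)
  exact LinearMap.ext fun x => hi <| by simpa [hY h] using (hh x).symm

theorem isPerfectExactSeq_of_hom_eq_zero {A : Type} [Ring A] {X Y Z : Type}
    [AddCommGroup X] [AddCommGroup Y] [AddCommGroup Z]
    [Module Aᵐᵒᵖ X] [Module Aᵐᵒᵖ Y] [Module Aᵐᵒᵖ Z]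
    {f : X →ₗ[Aᵐᵒᵖ] Y} {g : Y →ₗ[Aᵐᵒᵖ] Z} (hfg : IsShortExactSeq A f g)
    (hY : ∀ φ : Y →ₗ[Aᵐᵒᵖ] A, φ = 0) (hX : ∀ ψ : X →ₗ[Aᵐᵒᵖ] A, ψ = 0) :
    IsPerfectExactSeq A f g := by
  refine ⟨hfg, fun _ _ h => (LinearMap.cancel_right hfg.2.2).mp h,
    fun φ => ⟨fun _ => ⟨0, ?_⟩, fun _ => hX _⟩, fun ψ => ⟨0, ?_⟩⟩
  · exact (hY _).trans (hY φ).symm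
  · exact (hX _).trans (hX ψ).symm

theorem hom_eq_zero_and_sesFromSubmodule_perfectExact_of_domdim_ge_one_general
    (A : Type) [Ring A]
    -- dominant dimension at least 1 :
    (Q : Type) [AddCommGroup Q] [Module Aᵐᵒᵖ Q] [Module.Finite Aᵐᵒᵖ Q]
    (hQproj : Module.Projective Aᵐᵒᵖ Q) (hQinj : Module.Injective Aᵐᵒᵖ Q)
    (i : A →ₗ[Aᵐᵒᵖ] Q) (hi : Function.Injective i)
    -- `Y` with `Hom_A(Y,Z) = 0` for all finitely generated projective-injective `Z` :
    (Y : Type) [AddCommGroup Y] [Module Aᵐᵒᵖ Y]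
    (hY : ∀ (Z : Type) [AddCommGroup Z] [Module Aᵐᵒᵖ Z] [Module.Finite Aᵐᵒᵖ Z],
      Module.Projective Aᵐᵒᵖ Z → Module.Injective Aᵐᵒᵖ Z →
      ∀ φ : Y →ₗ[Aᵐᵒᵖ] Z, φ = 0)
    -- a submodule `Y'` of `Y` :
    (Y' : Submodule Aᵐᵒᵖ Y) :
    (∀ φ : Y' →ₗ[Aᵐᵒᵖ] A, φ = 0) ∧
    (∀ (X Z : Type) [AddCommGroup X] [AddCommGroup Z] [Module Aᵐᵒᵖ X] [Module Aᵐᵒᵖ Z]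
      [Module.Finite Aᵐᵒᵖ X] [Module.Finite Aᵐᵒᵖ Z]
      (f : X →ₗ[Aᵐᵒᵖ] Y') (g : Y' →ₗ[Aᵐᵒᵖ] Z),
      IsShortExactSeq A f g → IsPerfectExactSeq A f g) := by
  have := hQinj
  have hom_eq_zero : ∀ {X : Type} [AddCommGroup X] [Module Aᵐᵒᵖ X] (j : X →ₗ[Aᵐᵒᵖ] Y),
      Function.Injective j → ∀ ψ : X →ₗ[Aᵐᵒᵖ] A, ψ = 0 := fun j hj =>
    LinearMap.eq_zero_of_forall_hom_to_injective_eq_zero i hi (hY Q hQproj hQinj) j hj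
  have hY' := hom_eq_zero Y'.subtype Y'.injective_subtype
  refine ⟨hY', fun X Z _ _ _ _ _ _ f g hfg => isPerfectExactSeq_of_hom_eq_zero hfg hY' ?_⟩
  exact hom_eq_zero (Y'.subtype ∘ₗ f) (Y'.injective_subtype.comp hfg.1)

/-- Suppose `A` (a finite dimensional `k`-algebra) has dominant dimension at least `1`,
i.e. there is a finitely generated projective-injective right `A`-module `Q` and an
injective `A`-linear map `A → Q`.  If `Y` is a finitely generated right `A`-module with
`Hom_A(Y,Z) = 0` for every finitely generated projective-injective right `A`-module `Z`,
and `Y'` is a submodule of `Y`, then `Hom_A(Y',A) = 0` and every short exact sequence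
`0 → X → Y' → Z → 0` of finitely generated right `A`-modules is perfect exact. -/
theorem hom_eq_zero_and_sesFromSubmodule_perfectExact_of_domdim_ge_one
    (k A : Type) [Field k] [Ring A] [Algebra k A] [FiniteDimensional k A]
    -- dominant dimension at least 1 :
    (Q : Type) [AddCommGroup Q] [Module Aᵐᵒᵖ Q] [Module.Finite Aᵐᵒᵖ Q]
    (hQproj : Module.Projective Aᵐᵒᵖ Q) (hQinj : Module.Injective Aᵐᵒᵖ Q)
    (i : A →ₗ[Aᵐᵒᵖ] Q) (hi : Function.Injective i)
    -- `Y` with `Hom_A(Y,Z) = 0` for all finitely generated projective-injective `Z` :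
    (Y : Type) [AddCommGroup Y] [Module Aᵐᵒᵖ Y] [Module.Finite Aᵐᵒᵖ Y]
    (hY : ∀ (Z : Type) [AddCommGroup Z] [Module Aᵐᵒᵖ Z] [Module.Finite Aᵐᵒᵖ Z],
      Module.Projective Aᵐᵒᵖ Z → Module.Injective Aᵐᵒᵖ Z →
      ∀ φ : Y →ₗ[Aᵐᵒᵖ] Z, φ = 0)
    -- a submodule `Y'` of `Y` :
    (Y' : Submodule Aᵐᵒᵖ Y) :
    (∀ φ : Y' →ₗ[Aᵐᵒᵖ] A, φ = 0) ∧
    (∀ (X Z : Type) [AddCommGroup X] [AddCommGroup Z] [Module Aᵐᵒᵖ X] [Module Aᵐᵒᵖ Z]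
      [Module.Finite Aᵐᵒᵖ X] [Module.Finite Aᵐᵒᵖ Z]
      (f : X →ₗ[Aᵐᵒᵖ] Y') (g : Y' →ₗ[Aᵐᵒᵖ] Z),
      IsShortExactSeq A f g → IsPerfectExactSeq A f g) :=
  hom_eq_zero_and_sesFromSubmodule_perfectExact_of_domdim_ge_one_general A Q hQproj hQinj i hi Y hY
    Y'
end

section
/- Let 0 → X →f Y →g Z → 0 and 0 → X →u U →v V → 0 be short exact sequences of finitely generated right A-modules, and let α : U → Y be a homomorphism with f = α ∘ u. Then there exists a homomorphism β : V → Z such that the sequence 0 → U → Y ⊕ V → Z → 0 is exact, where the first map sends x to (α(x), v(x)) and the second map sends (y, w) to g(y) + β(w). Moreover, if both given short exact sequences are perfect exact, then so is this new sequence. -/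
/-!
Because `ker v = u X` and `g ∘ α ∘ u = g ∘ f = 0`, the map `-(g ∘ α)` descends along the surjection
`v` to `β`, so that `g ∘ α + β ∘ v = 0`; exactness of the new sequence is then a diagram chase.
For perfectness, a functional `(φ₁, φ₂)` on `Y ⊕ V` vanishing on `U` has `φ₁ ∘ f = 0`, so
`φ₁ = ψ ∘ g` by perfectness of the first sequence, and then `φ₂ = ψ ∘ β` since both agree after
composing with the surjection `v`. Dually, a functional `ψ` on `U` extends to `Y ⊕ V` by extending
`ψ ∘ u` along `f` to some `ρ`, and then extending `ψ - ρ ∘ α`, which vanishes on `u X`, along `v`.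
-/

open LinearMap
open Function (Exact Injective Surjective)

section Pushout

variable {R : Type*} [Ring R] {X Y Z U V M : Type*}
  [AddCommGroup X] [AddCommGroup Y] [AddCommGroup Z] [AddCommGroup U] [AddCommGroup V]
  [AddCommGroup M] [Module R X] [Module R Y] [Module R Z] [Module R U] [Module R V] [Module R M]
  {f : X →ₗ[R] Y} {g : Y →ₗ[R] Z} {u : X →ₗ[R] U} {v : U →ₗ[R] V} {α : U →ₗ[R] Y}
  {β : V →ₗ[R] Z}

theorem Function.Exact.exists_comp_eq_of_surjective (huv : Exact u v) (hv : Surjective v)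
    (φ : U →ₗ[R] M) (hφ : φ.comp u = 0) : ∃ ψ : V →ₗ[R] M, ψ.comp v = φ :=
  ⟨((range u).liftQ φ (range_le_ker_iff.mpr hφ)).comp
      (huv.linearEquivOfSurjective hv).symm.toLinearMap, by ext; simp⟩

theorem coprod_comp_prod_eq_zero (hβ : β.comp v = -(g.comp α)) :
    (g.coprod β).comp (α.prod v) = 0 := by
  rw [coprod_comp_prod, hβ, add_neg_cancel]

theorem injective_prod_of_exact (hf : Injective f) (huv : Exact u v) (hα : α.comp u = f) :
    Injective (α.prod v) := by
  refine (injective_iff_map_eq_zero _).mpr fun x hx => ?_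
  obtain ⟨hαx, hvx⟩ := Prod.ext_iff.mp hx
  obtain ⟨x₀, rfl⟩ := (huv x).mp hvx
  have hfx₀ : f x₀ = f 0 := by rw [← hα, map_zero]; exact hαx
  rw [hf hfx₀, map_zero]

theorem exact_prod_coprod (hfg : Exact f g) (huv : Exact u v) (hv : Surjective v)
    (hα : α.comp u = f) (hβ : β.comp v = -(g.comp α)) :
    Exact (α.prod v) (g.coprod β) := by
  rintro ⟨y, w⟩
  constructor
  · intro hyw
    obtain ⟨x, rfl⟩ := hv w
    have hgy : g (y - α x) = 0 := by
      have hyw : g y + β (v x) = 0 := hyw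
      rw [← comp_apply β v, hβ, LinearMap.neg_apply, comp_apply, ← sub_eq_add_neg] at hyw
      rwa [map_sub]
    obtain ⟨x₀, hx₀⟩ := (hfg _).mp hgy
    refine ⟨x + u x₀, ?_⟩
    change (α (x + u x₀), v (x + u x₀)) = (y, v x)
    rw [map_add, map_add, huv.apply_apply_eq_zero, ← comp_apply α u, hα, hx₀, add_sub_cancel,
      add_zero]
  · rintro ⟨x, hx⟩
    rw [← hx]
    exact LinearMap.congr_fun (coprod_comp_prod_eq_zero hβ) x

theorem surjective_coprod_of_surjective_left (hg : Surjective g) (β : V →ₗ[R] Z) :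
    Surjective (g.coprod β) := fun z =>
  let ⟨y, hy⟩ := hg z
  ⟨(y, 0), by simp [hy]⟩

theorem exact_comp_coprod_comp_prod
    (hfg : Exact (fun ψ : Z →ₗ[R] M => ψ.comp g) (fun φ : Y →ₗ[R] M => φ.comp f))
    (huv : Exact u v) (hv : Surjective v) (hα : α.comp u = f) (hβ : β.comp v = -(g.comp α)) :
    Exact (fun ψ : Z →ₗ[R] M => ψ.comp (g.coprod β))
      (fun φ : Y × V →ₗ[R] M => φ.comp (α.prod v)) := by
  intro φ
  constructor
  · intro hφ
    set φ₁ := φ.comp (inl R Y V)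
    set φ₂ := φ.comp (inr R Y V)
    have hφ_eq : φ = φ₁.coprod φ₂ := by rw [← comp_coprod, coprod_inl_inr]; rfl
    have hφ₁α : φ₁.comp α = -(φ₂.comp v) := by
      rw [eq_neg_iff_add_eq_zero, ← coprod_comp_prod, ← hφ_eq]
      exact hφ
    have hφ₁f : φ₁.comp f = 0 := by
      rw [← hα, ← comp_assoc, hφ₁α, neg_comp, comp_assoc, huv.linearMap_comp_eq_zero, comp_zero,
        neg_zero]
    obtain ⟨ψ, hψ : ψ.comp g = φ₁⟩ := (hfg φ₁).mp hφ₁f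
    have hψβ : ψ.comp β = φ₂ := by
      rw [← cancel_right hv, comp_assoc, hβ, comp_neg, ← comp_assoc, hψ, hφ₁α, neg_neg]
    exact ⟨ψ, by change ψ.comp _ = _; rw [hφ_eq, comp_coprod, hψ, hψβ]⟩
  · rintro ⟨ψ, rfl⟩
    change (ψ.comp _).comp _ = 0
    rw [comp_assoc, coprod_comp_prod_eq_zero hβ, comp_zero]

theorem surjective_comp_prod (hf : Surjective fun φ : Y →ₗ[R] M => φ.comp f)
    (huv : Exact (fun σ : V →ₗ[R] M => σ.comp v) (fun φ : U →ₗ[R] M => φ.comp u))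
    (hα : α.comp u = f) :
    Surjective fun φ : Y × V →ₗ[R] M => φ.comp (α.prod v) := by
  intro ψ
  obtain ⟨ρ, hρ : ρ.comp f = ψ.comp u⟩ := hf (ψ.comp u)
  obtain ⟨σ, hσ : σ.comp v = ψ - ρ.comp α⟩ := (huv (ψ - ρ.comp α)).mp <| by
    change (ψ - ρ.comp α).comp u = 0
    rw [sub_comp, comp_assoc, hα, hρ, sub_self]
  exact ⟨ρ.coprod σ, by change _ ∘ₗ _ = _; rw [coprod_comp_prod, hσ, add_sub_cancel]⟩

end Pushout

theorem perfectExactSeq_pushout_general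
    (A : Type) [Ring A]
    (X Y Z U V : Type)
    [AddCommGroup X] [AddCommGroup Y] [AddCommGroup Z] [AddCommGroup U] [AddCommGroup V]
    [Module Aᵐᵒᵖ X] [Module Aᵐᵒᵖ Y] [Module Aᵐᵒᵖ Z] [Module Aᵐᵒᵖ U] [Module Aᵐᵒᵖ V]
    (f : X →ₗ[Aᵐᵒᵖ] Y) (g : Y →ₗ[Aᵐᵒᵖ] Z) (u : X →ₗ[Aᵐᵒᵖ] U) (v : U →ₗ[Aᵐᵒᵖ] V)
    (α : U →ₗ[Aᵐᵒᵖ] Y)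
    (hfg : IsShortExactSeq A f g) (huv : IsShortExactSeq A u v)
    (hα : α.comp u = f) :
    ∃ β : V →ₗ[Aᵐᵒᵖ] Z,
      IsShortExactSeq A (α.prod v) (g.coprod β) ∧
      (IsPerfectExactSeq A f g → IsPerfectExactSeq A u v →
        IsPerfectExactSeq A (α.prod v) (g.coprod β)) := by
  obtain ⟨hf, hfg, hg⟩ := hfg
  obtain ⟨-, huv, hv⟩ := huv
  obtain ⟨β, hβ⟩ := huv.exists_comp_eq_of_surjective hv (-(g.comp α)) <| by
    rw [neg_comp, comp_assoc, hα, hfg.linearMap_comp_eq_zero, neg_zero]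
  have hses : IsShortExactSeq A (α.prod v) (g.coprod β) :=
    ⟨injective_prod_of_exact hf huv hα, exact_prod_coprod hfg huv hv hα hβ,
      surjective_coprod_of_surjective_left hg β⟩
  refine ⟨β, hses, fun ⟨_, _, hfg_dual, hf_dual⟩ ⟨_, _, huv_dual, _⟩ =>
    ⟨hses, fun _ _ h => (cancel_right hses.2.2).mp h, ?_, ?_⟩⟩
  · exact exact_comp_coprod_comp_prod hfg_dual huv hv hα hβ
  · exact surjective_comp_prod hf_dual huv_dual hα

/-- Pushout construction: given short exact sequences `0 → X →f Y →g Z → 0` and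
`0 → X →u U →v V → 0` of finitely generated right `A`-modules and `α : U → Y` with
`f = α ∘ u`, there is `β : V → Z` such that
`0 → U → Y ⊕ V → Z → 0`, with maps `x ↦ (α x, v x)` and `(y, w) ↦ g y + β w`,
is a short exact sequence; moreover if the two given sequences are perfect exact,
then so is the new one. -/
theorem perfectExactSeq_pushout
    (k A : Type) [Field k] [Ring A] [Algebra k A] [FiniteDimensional k A]
    (X Y Z U V : Type)
    [AddCommGroup X] [AddCommGroup Y] [AddCommGroup Z] [AddCommGroup U] [AddCommGroup V]
    [Module Aᵐᵒᵖ X] [Module Aᵐᵒᵖ Y] [Module Aᵐᵒᵖ Z] [Module Aᵐᵒᵖ U] [Module Aᵐᵒᵖ V]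
    [Module.Finite Aᵐᵒᵖ X] [Module.Finite Aᵐᵒᵖ Y] [Module.Finite Aᵐᵒᵖ Z]
    [Module.Finite Aᵐᵒᵖ U] [Module.Finite Aᵐᵒᵖ V]
    (f : X →ₗ[Aᵐᵒᵖ] Y) (g : Y →ₗ[Aᵐᵒᵖ] Z) (u : X →ₗ[Aᵐᵒᵖ] U) (v : U →ₗ[Aᵐᵒᵖ] V)
    (α : U →ₗ[Aᵐᵒᵖ] Y)
    (hfg : IsShortExactSeq A f g) (huv : IsShortExactSeq A u v)
    (hα : α.comp u = f) :
    ∃ β : V →ₗ[Aᵐᵒᵖ] Z,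
      IsShortExactSeq A (α.prod v) (g.coprod β) ∧
      (IsPerfectExactSeq A f g → IsPerfectExactSeq A u v →
        IsPerfectExactSeq A (α.prod v) (g.coprod β)) :=
  perfectExactSeq_pushout_general A X Y Z U V f g u v α hfg huv hα
end

section
/- Let X, U, P, V, Y, Z be finitely generated right A-modules and let s : X → U, ι : X → P, t : U → V, π : P → V, v : U → Y, g : Y → Z, w : V → Z be homomorphisms such that the sequences 0 → X → U ⊕ P → V → 0 (first map x ↦ (s(x), ι(x)), second map (u, p) ↦ t(u) + π(p)) and 0 → U → Y ⊕ V → Z → 0 (first map u ↦ (v(u), t(u)), second map (y, v') ↦ g(y) + w(v')) are exact. Then the sequence 0 → X → Y ⊕ P → Z → 0 with first map x ↦ (v(s(x)), ι(x)) and second map (y, p) ↦ g(y) − w(π(p)) is exact. Moreover, if both given short exact sequences are perfect exact, then so is this new sequence. -/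
/-!
Viewing `0 → X → U ⊕ P → V → 0` as a bicartesian square `X → U, P → V`, the new sequence is the
outer square obtained by pasting the two given ones; the three parts of short exactness are checked
by diagram chasing. For perfect exactness, `Hom_A(-, A)` turns the two given sequences into short
exact sequences of the same shape, with the pasting order reversed (`Z* → Y* ⊕ V* → U*` comes
first). Pasting these, then swapping the middle summands and fixing signs, gives the dual of the
new sequence.
-/

namespace AddMonoidHom

def IsShortExact {X Y Z : Type*} [AddCommGroup X] [AddCommGroup Y] [AddCommGroup Z]
    (f : X →+ Y) (g : Y →+ Z) : Prop :=
  Function.Injective f ∧ Function.Exact f g ∧ Function.Surjective g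

section Ladder

variable {X Y Z X' Y' Z' : Type*} [AddCommGroup X] [AddCommGroup Y] [AddCommGroup Z]
  [AddCommGroup X'] [AddCommGroup Y'] [AddCommGroup Z']
  {f : X →+ Y} {g : Y →+ Z} {f' : X' →+ Y'} {g' : Y' →+ Z'}

theorem isShortExact_iff_of_ladder (e₁ : X ≃+ X') (e₂ : Y ≃+ Y') (e₃ : Z ≃+ Z')
    (comm₁₂ : f'.comp e₁ = (e₂ : Y →+ Y').comp f) (comm₂₃ : g'.comp e₂ = (e₃ : Z →+ Z').comp g) :
    IsShortExact f g ↔ IsShortExact f' g' := by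
  have hf : ⇑f' ∘ e₁ = e₂ ∘ f := congrArg DFunLike.coe comm₁₂
  have hg : ⇑g' ∘ e₂ = e₃ ∘ g := congrArg DFunLike.coe comm₂₃
  refine and_congr ?_ <|
    and_congr (Function.Exact.iff_of_ladder_addEquiv e₁ e₂ e₃ comm₁₂ comm₂₃).symm ?_
  · rw [← EquivLike.comp_injective f e₂, ← hf, EquivLike.injective_comp]
  · rw [← EquivLike.comp_surjective g e₃, ← hg, EquivLike.surjective_comp]

end Ladder

variable {X U P V Y Z : Type*} [AddCommGroup X] [AddCommGroup U] [AddCommGroup P]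
  [AddCommGroup V] [AddCommGroup Y] [AddCommGroup Z]

theorem IsShortExact.swap {s : X →+ U} {ι : X →+ P} {t : U →+ V} {π : P →+ V}
    (h : IsShortExact (s.prod ι) (t.coprod π)) : IsShortExact (ι.prod s) (π.coprod t) :=
  (isShortExact_iff_of_ladder (.refl X) AddEquiv.prodComm (.refl V) (by rfl)
    (by ext; simp [add_comm])).1 h

theorem IsShortExact.swap_neg {a : X →+ U} {b : X →+ P} {c : U →+ V} {d : P →+ V}
    (h : IsShortExact (a.prod b) (c.coprod (-d))) : IsShortExact (b.prod (-a)) (d.coprod c) := by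
  refine (isShortExact_iff_of_ladder (.refl X)
    (AddEquiv.prodComm.trans ((AddEquiv.refl P).prodCongr (AddEquiv.neg U))) (AddEquiv.neg V)
    (by rfl) ?_).1 h
  ext; simp [AddEquiv.prodCongr]

section Snake

variable (s : X →+ U) (ι : X →+ P) (t : U →+ V) (π : P →+ V) (v : U →+ Y) (g : Y →+ Z)
  (w : V →+ Z)

theorem injective_snake (hinj₁ : Function.Injective (s.prod ι))
    (hex₁ : Function.Exact (s.prod ι) (t.coprod π)) (hinj₂ : Function.Injective (v.prod t)) :
    Function.Injective ((v.comp s).prod ι) := by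
  refine (injective_iff_map_eq_zero _).2 fun x hx ↦ ?_
  simp only [prod_apply, comp_apply, Prod.mk_eq_zero] at hx
  have hts : t (s x) = 0 := by
    simpa [hx.2] using hex₁.apply_apply_eq_zero x
  have hs : s x = 0 := (injective_iff_map_eq_zero _).1 hinj₂ _ (by simp [hx.1, hts])
  exact (injective_iff_map_eq_zero _).1 hinj₁ _ (by simp [hs, hx.2])

theorem exact_snake (h₁ : Function.Exact (s.prod ι) (t.coprod π))
    (h₂ : Function.Exact (v.prod t) (g.coprod w)) :
    Function.Exact ((v.comp s).prod ι) (g.coprod (-(w.comp π))) := by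
  rintro ⟨y, p⟩
  simp only [coprod_apply, neg_apply, comp_apply, Set.mem_range, prod_apply, Prod.mk.injEq]
  constructor
  · intro hyp
    obtain ⟨u, hvu, htu⟩ : ∃ u, v u = y ∧ t u = -π p := by
      simpa using (h₂ (y, -π p)).1 (by simpa [sub_eq_add_neg] using hyp)
    obtain ⟨x, hsx, hιx⟩ : ∃ x, s x = u ∧ ι x = p := by
      simpa using (h₁ (u, p)).1 (by simp [htu])
    exact ⟨x, by rw [hsx, hvu], hιx⟩
  · rintro ⟨x, rfl, rfl⟩
    have h₁x := h₁.apply_apply_eq_zero x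
    have h₂x := h₂.apply_apply_eq_zero (s x)
    simp only [prod_apply, coprod_apply] at h₁x h₂x
    rw [eq_neg_of_add_eq_zero_right h₁x, map_neg, neg_neg, h₂x]

theorem surjective_snake (hsurj₁ : Function.Surjective (t.coprod π))
    (hex₂ : Function.Exact (v.prod t) (g.coprod w)) (hsurj₂ : Function.Surjective (g.coprod w)) :
    Function.Surjective (g.coprod (-(w.comp π))) := by
  intro z
  obtain ⟨⟨y, v'⟩, rfl⟩ := hsurj₂ z
  obtain ⟨⟨u, p⟩, rfl⟩ := hsurj₁ v'
  have hu : g (v u) + w (t u) = 0 := by simpa using hex₂.apply_apply_eq_zero u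
  refine ⟨(y - v u, -p), ?_⟩
  simp only [coprod_apply, neg_apply, comp_apply, map_sub, map_neg, map_add]
  rw [eq_neg_of_add_eq_zero_left hu]
  abel

theorem IsShortExact.snake (h₁ : IsShortExact (s.prod ι) (t.coprod π))
    (h₂ : IsShortExact (v.prod t) (g.coprod w)) :
    IsShortExact ((v.comp s).prod ι) (g.coprod (-(w.comp π))) :=
  ⟨injective_snake s ι t π v h₁.1 h₁.2.1 h₂.1, exact_snake s ι t π v g w h₁.2.1 h₂.2.1,
    surjective_snake t π v g w h₁.2.2 h₂.2.1 h₂.2.2⟩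

end Snake

end AddMonoidHom

namespace LinearMap

variable {R : Type*} [Semiring R] (E : Type*) [AddCommGroup E] [Module R E]
  {X U P V : Type*} [AddCommGroup X] [AddCommGroup U] [AddCommGroup P] [AddCommGroup V]
  [Module R X] [Module R U] [Module R P] [Module R V]

def precompAddHom (f : X →ₗ[R] U) : (U →ₗ[R] E) →+ (X →ₗ[R] E) where
  toFun φ := φ.comp f
  map_zero' := rfl
  map_add' _ _ := rfl

@[simp]
theorem precompAddHom_apply (f : X →ₗ[R] U) (φ : U →ₗ[R] E) : precompAddHom E f φ = φ.comp f :=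
  rfl

theorem precompAddHom_comp (f : X →ₗ[R] U) (g : U →ₗ[R] V) :
    precompAddHom E (g.comp f) = (precompAddHom E f).comp (precompAddHom E g) :=
  rfl

theorem precompAddHom_neg (f : X →ₗ[R] U) : precompAddHom E (-f) = -precompAddHom E f := by
  ext; simp

theorem isShortExact_precompAddHom_iff (s : X →ₗ[R] U) (ι : X →ₗ[R] P) (t : U →ₗ[R] V)
    (π : P →ₗ[R] V) :
    AddMonoidHom.IsShortExact ((precompAddHom E t).prod (precompAddHom E π))
        ((precompAddHom E s).coprod (precompAddHom E ι)) ↔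
      AddMonoidHom.IsShortExact (precompAddHom E (t.coprod π)) (precompAddHom E (s.prod ι)) := by
  refine AddMonoidHom.isShortExact_iff_of_ladder (.refl _) (coprodEquiv ℕ).toAddEquiv (.refl _)
    ?_ ?_
  · ext φ : 1
    ext <;> simp
  · ext α : 1
    ext x
    simp

end LinearMap

theorem perfectExactSeq_snake_fst_general
    (A : Type) [Ring A]
    (X U P V Y Z : Type)
    [AddCommGroup X] [AddCommGroup U] [AddCommGroup P] [AddCommGroup V]
    [AddCommGroup Y] [AddCommGroup Z]
    [Module Aᵐᵒᵖ X] [Module Aᵐᵒᵖ U] [Module Aᵐᵒᵖ P] [Module Aᵐᵒᵖ V]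
    [Module Aᵐᵒᵖ Y] [Module Aᵐᵒᵖ Z]
    (s : X →ₗ[Aᵐᵒᵖ] U) (ι : X →ₗ[Aᵐᵒᵖ] P) (t : U →ₗ[Aᵐᵒᵖ] V) (π : P →ₗ[Aᵐᵒᵖ] V)
    (v : U →ₗ[Aᵐᵒᵖ] Y) (g : Y →ₗ[Aᵐᵒᵖ] Z) (w : V →ₗ[Aᵐᵒᵖ] Z)
    (h₁ : IsShortExactSeq A (s.prod ι) (t.coprod π))
    (h₂ : IsShortExactSeq A (v.prod t) (g.coprod w)) :
    IsShortExactSeq A ((v.comp s).prod ι) (g.coprod (-(w.comp π))) ∧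
    (IsPerfectExactSeq A (s.prod ι) (t.coprod π) →
      IsPerfectExactSeq A (v.prod t) (g.coprod w) →
      IsPerfectExactSeq A ((v.comp s).prod ι) (g.coprod (-(w.comp π)))) := by
  have snake : IsShortExactSeq A ((v.comp s).prod ι) (g.coprod (-(w.comp π))) :=
    AddMonoidHom.IsShortExact.snake s.toAddMonoidHom ι.toAddMonoidHom t.toAddMonoidHom
      π.toAddMonoidHom v.toAddMonoidHom g.toAddMonoidHom w.toAddMonoidHom h₁ h₂
  refine ⟨snake, fun ⟨_, dual₁⟩ ⟨_, dual₂⟩ ↦ ⟨snake, ?_⟩⟩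
  have dual₁' := ((LinearMap.isShortExact_precompAddHom_iff A s ι t π).2 dual₁).swap
  have dual₂' := ((LinearMap.isShortExact_precompAddHom_iff A v t g w).2 dual₂).swap
  refine (LinearMap.isShortExact_precompAddHom_iff A (v.comp s) ι g (-(w.comp π))).1 ?_
  rw [LinearMap.precompAddHom_neg, LinearMap.precompAddHom_comp, LinearMap.precompAddHom_comp]
  exact (dual₂'.snake _ _ _ _ _ _ _ dual₁').swap_neg

/-- Snake construction: given short exact sequences
`0 → X → U ⊕ P → V → 0` (maps `x ↦ (s x, ι x)` and `(u, p) ↦ t u + π p`) and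
`0 → U → Y ⊕ V → Z → 0` (maps `u ↦ (v u, t u)` and `(y, v') ↦ g y + w v'`)
of finitely generated right `A`-modules, the sequence
`0 → X → Y ⊕ P → Z → 0` with maps `x ↦ (v (s x), ι x)` and `(y, p) ↦ g y - w (π p)`
is short exact; moreover if the two given sequences are perfect exact,
then so is the new one. -/
theorem perfectExactSeq_snake_fst
    (k A : Type) [Field k] [Ring A] [Algebra k A] [FiniteDimensional k A]
    (X U P V Y Z : Type)
    [AddCommGroup X] [AddCommGroup U] [AddCommGroup P] [AddCommGroup V]
    [AddCommGroup Y] [AddCommGroup Z]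
    [Module Aᵐᵒᵖ X] [Module Aᵐᵒᵖ U] [Module Aᵐᵒᵖ P] [Module Aᵐᵒᵖ V]
    [Module Aᵐᵒᵖ Y] [Module Aᵐᵒᵖ Z]
    [Module.Finite Aᵐᵒᵖ X] [Module.Finite Aᵐᵒᵖ U] [Module.Finite Aᵐᵒᵖ P]
    [Module.Finite Aᵐᵒᵖ V] [Module.Finite Aᵐᵒᵖ Y] [Module.Finite Aᵐᵒᵖ Z]
    (s : X →ₗ[Aᵐᵒᵖ] U) (ι : X →ₗ[Aᵐᵒᵖ] P) (t : U →ₗ[Aᵐᵒᵖ] V) (π : P →ₗ[Aᵐᵒᵖ] V)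
    (v : U →ₗ[Aᵐᵒᵖ] Y) (g : Y →ₗ[Aᵐᵒᵖ] Z) (w : V →ₗ[Aᵐᵒᵖ] Z)
    (h₁ : IsShortExactSeq A (s.prod ι) (t.coprod π))
    (h₂ : IsShortExactSeq A (v.prod t) (g.coprod w)) :
    IsShortExactSeq A ((v.comp s).prod ι) (g.coprod (-(w.comp π))) ∧
    (IsPerfectExactSeq A (s.prod ι) (t.coprod π) →
      IsPerfectExactSeq A (v.prod t) (g.coprod w) →
      IsPerfectExactSeq A ((v.comp s).prod ι) (g.coprod (-(w.comp π)))) :=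
  perfectExactSeq_snake_fst_general A X U P V Y Z s ι t π v g w h₁ h₂
end

section
/- Let 0 → X →f E →g Z → 0 be an almost split sequence of finitely generated right A-modules. Then f factors through a finitely generated projective right A-module if and only if X is projective or E is projective. -/
/-!
If `f = b ∘ a` with `P` projective and `a` is not a split monomorphism, then `a = h ∘ f` because
`f` is left almost split, so `b ∘ h` fixes `f`. Every such endomorphism `φ` of `E` is an
automorphism: `1 - φ` kills the image of `f`, hence equals `s ∘ g`, and `g ∘ s` is a
non-invertible endomorphism of the indecomposable finite-length module `Z`, hence nilpotent by
Fitting's lemma; so `s ∘ g` is nilpotent too and `φ = 1 - s ∘ g` is a unit. Thus `h` is a split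
monomorphism and `E` is a direct summand of `P`.
-/

section

variable {R : Type*} [Ring R] {M N P Q : Type*} [AddCommGroup M] [AddCommGroup N]
  [AddCommGroup P] [AddCommGroup Q] [Module R M] [Module R N] [Module R P] [Module R Q]

lemma Function.Exact.exists_comp_eq_of_comp_eq_zero {f : M →ₗ[R] N} {g : N →ₗ[R] P}
    (hfg : Function.Exact f g) (hg : Function.Surjective g) (u : N →ₗ[R] Q)
    (hu : u ∘ₗ f = 0) : ∃ s : P →ₗ[R] Q, s ∘ₗ g = u := by
  refine ⟨(LinearMap.range f).liftQ u ?_ ∘ₗ (hfg.linearEquivOfSurjective hg).symm, ?_⟩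
  · rintro _ ⟨x, rfl⟩
    exact LinearMap.congr_fun hu x
  · ext x
    simp

lemma IsNilpotent.comp_comm {g : N →ₗ[R] P} {s : P →ₗ[R] N}
    (h : IsNilpotent (g ∘ₗ s)) : IsNilpotent (s ∘ₗ g) := by
  obtain ⟨n, hn⟩ := h
  have pow_succ_eq : ∀ m : ℕ, (s ∘ₗ g) ^ (m + 1) = s ∘ₗ (((g ∘ₗ s) ^ m) ∘ₗ g) := by
    intro m
    induction m with
    | zero => rfl
    | succ m ih =>
      rw [pow_succ', ih, pow_succ']
      rfl
  exact ⟨n + 1, by rw [pow_succ_eq, hn, LinearMap.zero_comp, LinearMap.comp_zero]⟩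

lemma LinearMap.exists_comp_eq_id_of_bijective_comp {g : N →ₗ[R] P} {s : P →ₗ[R] N}
    (h : Function.Bijective (g ∘ₗ s)) : ∃ t : P →ₗ[R] N, g ∘ₗ t = LinearMap.id :=
  ⟨s ∘ₗ (LinearEquiv.ofBijective _ h).symm.toLinearMap,
    LinearMap.ext (LinearEquiv.ofBijective _ h).apply_symm_apply⟩

/-- Fitting's lemma for an indecomposable module of finite length. -/
lemma Module.End.isNilpotent_of_not_bijective [IsArtinian R M] [IsNoetherian R M]
    (hind : ∀ N N' : Submodule R M, IsCompl N N' → N = ⊥ ∨ N' = ⊥)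
    {σ : Module.End R M} (hσ : ¬ Function.Bijective σ) : IsNilpotent σ := by
  obtain ⟨n, hn⟩ := Filter.eventually_atTop.mp σ.eventually_isCompl_ker_pow_range_pow
  rcases hind _ _ (hn (n + 1) n.le_succ) with hker | hrange
  · refine absurd (IsArtinian.bijective_of_injective_endomorphism σ ?_) hσ
    rw [← LinearMap.ker_eq_bot, eq_bot_iff, ← hker]
    intro x hx
    rw [LinearMap.mem_ker] at hx ⊢
    rw [pow_succ, Module.End.mul_apply, hx, map_zero]
  · exact ⟨n + 1, LinearMap.range_eq_bot.mp hrange⟩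

end

namespace IsAlmostSplitSeq

variable {A : Type} [Ring A] {X E Z : Type} [AddCommGroup X] [AddCommGroup E] [AddCommGroup Z]
  [Module Aᵐᵒᵖ X] [Module Aᵐᵒᵖ E] [Module Aᵐᵒᵖ Z] {f : X →ₗ[Aᵐᵒᵖ] E} {g : E →ₗ[Aᵐᵒᵖ] Z}

lemma isNilpotent_snd_comp [IsArtinian Aᵐᵒᵖ Z] [IsNoetherian Aᵐᵒᵖ Z]
    (hass : IsAlmostSplitSeq A f g) (s : Z →ₗ[Aᵐᵒᵖ] E) : IsNilpotent (g ∘ₗ s) :=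
  Module.End.isNilpotent_of_not_bijective hass.2.2.2.1.2
    fun hbij ↦ hass.2.1 (LinearMap.exists_comp_eq_id_of_bijective_comp hbij)

/-- `f` is left minimal. -/
lemma isUnit_of_comp_fst_eq [IsArtinian Aᵐᵒᵖ Z] [IsNoetherian Aᵐᵒᵖ Z]
    (hass : IsAlmostSplitSeq A f g) {φ : Module.End Aᵐᵒᵖ E} (hφ : φ ∘ₗ f = f) : IsUnit φ := by
  obtain ⟨s, hs⟩ := hass.1.2.1.exists_comp_eq_of_comp_eq_zero hass.1.2.2 (1 - φ) (by
    rw [LinearMap.sub_comp, hφ]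
    exact sub_eq_zero.mpr (LinearMap.id_comp f))
  have hφ_eq : φ = 1 - s ∘ₗ g := by rw [hs, sub_sub_cancel]
  rw [hφ_eq]
  exact (hass.isNilpotent_snd_comp s).comp_comm.isUnit_one_sub

end IsAlmostSplitSeq

/-- For an almost split sequence `0 → X →f E →g Z → 0` of finitely generated right
`A`-modules, `f` factors through a finitely generated projective right `A`-module
if and only if `X` is projective or `E` is projective. -/
theorem almostSplitSeq_fst_factorsThroughProjective_iff
    (k A : Type) [Field k] [Ring A] [Algebra k A] [FiniteDimensional k A]
    (X E Z : Type) [AddCommGroup X] [AddCommGroup E] [AddCommGroup Z]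
    [Module Aᵐᵒᵖ X] [Module Aᵐᵒᵖ E] [Module Aᵐᵒᵖ Z]
    [Module.Finite Aᵐᵒᵖ X] [Module.Finite Aᵐᵒᵖ E] [Module.Finite Aᵐᵒᵖ Z]
    (f : X →ₗ[Aᵐᵒᵖ] E) (g : E →ₗ[Aᵐᵒᵖ] Z)
    (hass : IsAlmostSplitSeq A f g) :
    (∃ (P : Type) (_ : AddCommGroup P) (_ : Module Aᵐᵒᵖ P),
      Module.Finite Aᵐᵒᵖ P ∧ Module.Projective Aᵐᵒᵖ P ∧
      ∃ (a : X →ₗ[Aᵐᵒᵖ] P) (b : P →ₗ[Aᵐᵒᵖ] E), b.comp a = f) ↔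
    (Module.Projective Aᵐᵒᵖ X ∨ Module.Projective Aᵐᵒᵖ E) := by
  have : IsArtinianRing Aᵐᵒᵖ := IsArtinianRing.of_finite k Aᵐᵒᵖ
  have : IsNoetherianRing Aᵐᵒᵖ := IsNoetherianRing.of_finite k Aᵐᵒᵖ
  constructor
  · rintro ⟨P, _, _, _, _, a, b, hba⟩
    by_cases ha : ∃ r : P →ₗ[Aᵐᵒᵖ] X, r ∘ₗ a = LinearMap.id
    · obtain ⟨r, hr⟩ := ha
      exact Or.inl (.of_split a r hr)
    · obtain ⟨h, hh⟩ := hass.2.2.2.2.1 P a ha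
      have hbh : (b ∘ₗ h) ∘ₗ f = f := by rw [LinearMap.comp_assoc, hh, hba]
      obtain ⟨u, hu⟩ := hass.isUnit_of_comp_fst_eq hbh
      refine Or.inr (.of_split h (↑u⁻¹ ∘ₗ b) ?_)
      rw [LinearMap.comp_assoc, ← hu]
      exact u.inv_mul
  · rintro (hX | hE)
    · exact ⟨X, _, _, inferInstance, hX, LinearMap.id, f, f.comp_id⟩
    · exact ⟨E, _, _, inferInstance, hE, f, LinearMap.id, f.id_comp⟩
end

section
/- Let 0 → X →f E →g Z → 0 be an almost split sequence of finitely generated right A-modules. Then E has no direct summand that is a node; that is, there do not exist a direct summand N of E and an almost split sequence 0 → N → E_N → T → 0 such that N is simple, neither projective nor injective, and E_N is projective. -/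
open LinearMap

section

variable {R : Type*} [Ring R] {M N P₁ P₂ : Type*}
  [AddCommGroup M] [AddCommGroup N] [AddCommGroup P₁] [AddCommGroup P₂]
  [Module R M] [Module R N] [Module R P₁] [Module R P₂]

lemma comp_eq_id_of_indecomposable [Nontrivial N]
    (hM : ∀ Q Q' : Submodule R M, IsCompl Q Q' → Q = ⊥ ∨ Q' = ⊥)
    {s : N →ₗ[R] M} {r : M →ₗ[R] N} (hrs : r ∘ₗ s = LinearMap.id) : s ∘ₗ r = LinearMap.id := by
  have hidem : IsIdempotentElem (s ∘ₗ r) := by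
    change s ∘ₗ (r ∘ₗ s) ∘ₗ r = s ∘ₗ r
    rw [hrs, id_comp]
  rcases hM _ _ hidem.isCompl with hrange | hker
  · obtain ⟨n, hn⟩ := exists_ne (0 : N)
    have hrs' : ∀ n, r (s n) = n := LinearMap.congr_fun hrs
    have hsr : s ∘ₗ r = 0 := range_eq_bot.mp hrange
    refine absurd ?_ hn
    calc n = r ((s ∘ₗ r) (s n)) := by rw [comp_apply, hrs', hrs']
      _ = 0 := by rw [hsr, LinearMap.zero_apply, map_zero]
  · ext x
    exact ker_eq_bot.mp hker (LinearMap.congr_fun hidem x)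

lemma IsSimpleModule.exists_retraction_or_comp_eq_id [IsSimpleModule R N]
    (u₁ : N →ₗ[R] P₁) (v₁ : P₁ →ₗ[R] N) (u₂ : N →ₗ[R] P₂) (v₂ : P₂ →ₗ[R] N)
    (h : v₁ ∘ₗ u₁ + v₂ ∘ₗ u₂ = LinearMap.id) :
    (∃ r : P₁ →ₗ[R] N, r ∘ₗ u₁ = LinearMap.id) ∨ v₂ ∘ₗ u₂ = LinearMap.id := by
  by_cases h₁ : v₁ ∘ₗ u₁ = 0
  · rw [h₁, zero_add] at h
    exact .inr h
  · let a := LinearEquiv.ofBijective _ (bijective_of_ne_zero h₁)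
    refine .inl ⟨a.symm.toLinearMap ∘ₗ v₁, ?_⟩
    ext x
    exact a.symm_apply_apply x

end

section

variable {R : Type*} [Ring R] {X E Z N : Type*}
  [AddCommGroup X] [AddCommGroup E] [AddCommGroup Z] [AddCommGroup N]
  [Module R X] [Module R E] [Module R Z] [Module R N]
  {f : X →ₗ[R] E} {g : E →ₗ[R] Z}

lemma Function.Exact.exists_comp_eq_of_comp_eq_zero_s9 (hfg : Function.Exact f g)
    (hf : Function.Injective f) {φ : N →ₗ[R] E} (hφ : g ∘ₗ φ = 0) :
    ∃ p : N →ₗ[R] X, f ∘ₗ p = φ := by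
  have hmem : ∀ n, φ n ∈ range f := fun n => (hfg _).mp (LinearMap.congr_fun hφ n)
  refine ⟨(LinearEquiv.ofInjective f hf).symm.toLinearMap ∘ₗ φ.codRestrict _ hmem, ?_⟩
  ext n
  simp

lemma exists_retraction_of_factorization_through_projective {P : Type*} [AddCommGroup P]
    [Module R P] [Module.Projective R P] [IsSimpleModule R N]
    (hfg : Function.Exact f g) (hf : Function.Injective f) (hg : Function.Surjective g)
    (hX : ∀ Q Q' : Submodule R X, IsCompl Q Q' → Q = ⊥ ∨ Q' = ⊥)
    (hf_not_split : ¬ ∃ r : E →ₗ[R] X, r ∘ₗ f = LinearMap.id)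
    {ι : N →ₗ[R] E} {ρ : E →ₗ[R] N} (hρι : ρ ∘ₗ ι = LinearMap.id)
    {u : N →ₗ[R] P} {h : P →ₗ[R] Z} (hhu : h ∘ₗ u = g ∘ₗ ι) :
    ∃ r : P →ₗ[R] N, r ∘ₗ u = LinearMap.id := by
  obtain ⟨h', hh'⟩ := Module.projective_lifting_property g h hg
  obtain ⟨p, hp⟩ := hfg.exists_comp_eq_of_comp_eq_zero_s9 hf (φ := ι - h' ∘ₗ u) <| by
    rw [comp_sub, ← comp_assoc, hh', hhu, sub_self]
  have hsum : (ρ ∘ₗ h') ∘ₗ u + (ρ ∘ₗ f) ∘ₗ p = LinearMap.id := by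
    rw [comp_assoc, comp_assoc, hp, comp_sub, hρι, add_sub_cancel]
  rcases IsSimpleModule.exists_retraction_or_comp_eq_id u _ p _ hsum with hu | hρfp
  · exact hu
  · have : Nontrivial N := IsSimpleModule.nontrivial R N
    have hpρf : p ∘ₗ ρ ∘ₗ f = LinearMap.id := comp_eq_id_of_indecomposable hX hρfp
    exact absurd ⟨p ∘ₗ ρ, by rw [comp_assoc, hpρf]⟩ hf_not_split

end

theorem almostSplitSeq_middle_no_node_summand_general
    (A : Type) [Ring A]
    (X E Z : Type) [AddCommGroup X] [AddCommGroup E] [AddCommGroup Z]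
    [Module Aᵐᵒᵖ X] [Module Aᵐᵒᵖ E] [Module Aᵐᵒᵖ Z]
    [Module.Finite Aᵐᵒᵖ Z]
    (f : X →ₗ[Aᵐᵒᵖ] E) (g : E →ₗ[Aᵐᵒᵖ] Z)
    (hass : IsAlmostSplitSeq A f g) :
    ¬ ∃ (N EN T : Type)
      (_ : AddCommGroup N) (_ : AddCommGroup EN) (_ : AddCommGroup T)
      (_ : Module Aᵐᵒᵖ N) (_ : Module Aᵐᵒᵖ EN) (_ : Module Aᵐᵒᵖ T),
      Module.Finite Aᵐᵒᵖ N ∧ Module.Finite Aᵐᵒᵖ EN ∧ Module.Finite Aᵐᵒᵖ T ∧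
      -- `N` is a direct summand of `E`
      (∃ (ι : N →ₗ[Aᵐᵒᵖ] E) (ρ : E →ₗ[Aᵐᵒᵖ] N), ρ.comp ι = LinearMap.id) ∧
      -- `0 → N → E_N → T → 0` is an almost split sequence
      (∃ (u : N →ₗ[Aᵐᵒᵖ] EN) (w : EN →ₗ[Aᵐᵒᵖ] T), IsAlmostSplitSeq A u w) ∧
      -- `N` is a node and `E_N` is projective
      IsSimpleModule Aᵐᵒᵖ N ∧
      ¬ Module.Projective Aᵐᵒᵖ N ∧ ¬ Module.Injective Aᵐᵒᵖ N ∧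
      Module.Projective Aᵐᵒᵖ EN := by
  rintro ⟨N, EN, T, _, _, _, _, _, _, -, -, -, ⟨ι, ρ, hρι⟩, ⟨u, w, hnode⟩, hN, -, -, hEN⟩
  obtain ⟨⟨hf, hfg, hg⟩, hg_not_split, ⟨-, hX⟩, ⟨-, hZ⟩, -, -⟩ := hass
  obtain ⟨⟨hu, huw, hw⟩, hw_not_split, -, -, hu_left, -⟩ := hnode
  have : Nontrivial N := IsSimpleModule.nontrivial Aᵐᵒᵖ N
  have hgι : ¬ ∃ r : Z →ₗ[Aᵐᵒᵖ] N, r ∘ₗ g ∘ₗ ι = LinearMap.id := fun ⟨r, hr⟩ =>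
    hg_not_split ⟨ι ∘ₗ r, by rw [← comp_assoc]; exact comp_eq_id_of_indecomposable hZ hr⟩
  obtain ⟨h, hh⟩ := hu_left Z (g ∘ₗ ι) hgι
  have hf_not_split : ¬ ∃ r : E →ₗ[Aᵐᵒᵖ] X, r ∘ₗ f = LinearMap.id :=
    mt ((hfg.split_tfae hf hg).out 0 1).mpr hg_not_split
  exact hw_not_split <| ((huw.split_tfae hu hw).out 0 1).mpr <|
    exists_retraction_of_factorization_through_projective hfg hf hg hX hf_not_split hρι hh

/-- The middle term `E` of an almost split sequence `0 → X →f E →g Z → 0` of finitely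
generated right `A`-modules has no direct summand which is a node: there do not exist
a direct summand `N` of `E` and an almost split sequence `0 → N → E_N → T → 0` such
that `N` is simple, neither projective nor injective, and `E_N` is projective. -/
theorem almostSplitSeq_middle_no_node_summand
    (k A : Type) [Field k] [Ring A] [Algebra k A] [FiniteDimensional k A]
    (X E Z : Type) [AddCommGroup X] [AddCommGroup E] [AddCommGroup Z]
    [Module Aᵐᵒᵖ X] [Module Aᵐᵒᵖ E] [Module Aᵐᵒᵖ Z]
    [Module.Finite Aᵐᵒᵖ X] [Module.Finite Aᵐᵒᵖ E] [Module.Finite Aᵐᵒᵖ Z]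
    (f : X →ₗ[Aᵐᵒᵖ] E) (g : E →ₗ[Aᵐᵒᵖ] Z)
    (hass : IsAlmostSplitSeq A f g) :
    ¬ ∃ (N EN T : Type)
      (_ : AddCommGroup N) (_ : AddCommGroup EN) (_ : AddCommGroup T)
      (_ : Module Aᵐᵒᵖ N) (_ : Module Aᵐᵒᵖ EN) (_ : Module Aᵐᵒᵖ T),
      Module.Finite Aᵐᵒᵖ N ∧ Module.Finite Aᵐᵒᵖ EN ∧ Module.Finite Aᵐᵒᵖ T ∧
      -- `N` is a direct summand of `E`
      (∃ (ι : N →ₗ[Aᵐᵒᵖ] E) (ρ : E →ₗ[Aᵐᵒᵖ] N), ρ.comp ι = LinearMap.id) ∧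
      -- `0 → N → E_N → T → 0` is an almost split sequence
      (∃ (u : N →ₗ[Aᵐᵒᵖ] EN) (w : EN →ₗ[Aᵐᵒᵖ] T), IsAlmostSplitSeq A u w) ∧
      -- `N` is a node and `E_N` is projective
      IsSimpleModule Aᵐᵒᵖ N ∧
      ¬ Module.Projective Aᵐᵒᵖ N ∧ ¬ Module.Injective Aᵐᵒᵖ N ∧
      Module.Projective Aᵐᵒᵖ EN :=
  almostSplitSeq_middle_no_node_summand_general A X E Z f g hass
end

section
/- Let F be a ℤ-indexed cochain complex of finitely generated projective right A-modules belonging to the class L_A. Then for every k ∈ ℤ and every finitely generated right A-module Z that is both projective and injective, every A-homomorphism from H^k(F) to Z is zero, i.e., Hom_A(H^k(F), Z) = 0. -/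
/-!
In degrees `k < 0` the cohomology `H^k(F)` itself vanishes. For `k ≥ 0`, exactness of the dual
complex at `F^k` says that every `ψ : F^k → A` killing `im d^{k-1}` factors through `d^k`; this
passes to `Z`-valued maps because `Z` is a direct summand of some `A^n`. Extending
`φ : H^k(F) → Z` along `ker d^k ⊆ F^k` by injectivity of `Z` gives such a `ψ`, and then
`ψ = θ ∘ d^k` vanishes on `ker d^k`, so `φ = 0`.
-/

open LinearMap

def unopSelfLinearEquiv (A : Type*) [Ring A] : Aᵐᵒᵖ ≃ₗ[Aᵐᵒᵖ] A where
  toFun := MulOpposite.unop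
  invFun := MulOpposite.op
  map_add' _ _ := rfl
  map_smul' _ _ := rfl
  left_inv _ := rfl
  right_inv _ := rfl

section HomExact

variable {R M N P : Type*} [Ring R] [AddCommGroup M] [Module R M] [AddCommGroup N] [Module R N]
  [AddCommGroup P] [Module R P]

def HomExact (E : Type*) [AddCommGroup E] [Module R E] (f : M →ₗ[R] N) (g : N →ₗ[R] P) : Prop :=
  Function.Exact (fun θ : P →ₗ[R] E => θ ∘ₗ g) (fun ψ : N →ₗ[R] E => ψ ∘ₗ f)

variable {E Z : Type*} [AddCommGroup E] [Module R E] [AddCommGroup Z] [Module R Z]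
  {f : M →ₗ[R] N} {g : N →ₗ[R] P}

theorem HomExact.of_retract (hE : HomExact E f g) (s : Z →ₗ[R] E) (p : E →ₗ[R] Z)
    (hps : p ∘ₗ s = LinearMap.id) : HomExact Z f g := by
  intro ψ
  constructor
  · intro (hψ : ψ ∘ₗ f = 0)
    obtain ⟨θ, hθ : θ ∘ₗ g = s ∘ₗ ψ⟩ := (hE (s ∘ₗ ψ)).mp <| show (s ∘ₗ ψ) ∘ₗ f = 0 by
      rw [LinearMap.comp_assoc, hψ, LinearMap.comp_zero]
    refine ⟨p ∘ₗ θ, show (p ∘ₗ θ) ∘ₗ g = ψ from ?_⟩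
    rw [LinearMap.comp_assoc, hθ, ← LinearMap.comp_assoc, hps, LinearMap.id_comp]
  · rintro ⟨θ, rfl⟩
    have hsθ : (s ∘ₗ θ) ∘ₗ g ∘ₗ f = 0 := (hE _).mpr ⟨s ∘ₗ θ, rfl⟩
    calc (θ ∘ₗ g) ∘ₗ f = p ∘ₗ ((s ∘ₗ θ) ∘ₗ g ∘ₗ f) := by
          simp only [← LinearMap.comp_assoc, hps, LinearMap.id_comp]
      _ = 0 := by rw [hsθ, LinearMap.comp_zero]

theorem HomExact.pi {ι : Type*} (hE : HomExact E f g) : HomExact (ι → E) f g := by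
  intro ψ
  constructor
  · intro (hψ : ψ ∘ₗ f = 0)
    choose θ hθ using fun j => (hE (proj j ∘ₗ ψ)).mp <| show (proj j ∘ₗ ψ) ∘ₗ f = 0 by
      rw [LinearMap.comp_assoc, hψ, LinearMap.comp_zero]
    exact ⟨LinearMap.pi θ, ext fun x => funext fun j => congr($(hθ j) x)⟩
  · rintro ⟨θ, rfl⟩
    ext x j
    exact congr($((hE ((proj j ∘ₗ θ) ∘ₗ g)).mpr ⟨proj j ∘ₗ θ, rfl⟩) x)

/-- A finitely generated projective `Z` is a direct summand of some `Rⁿ ≅ Eⁿ`. -/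
theorem HomExact.of_projective [Module.Finite R Z] [Module.Projective R Z] (e : R ≃ₗ[R] E)
    (hE : HomExact E f g) : HomExact Z f g := by
  obtain ⟨n, π, hπ⟩ := Module.Finite.exists_fin' R Z
  obtain ⟨σ, hσ⟩ := Module.projective_lifting_property π LinearMap.id hπ
  have hR : HomExact R f g := hE.of_retract e.toLinearMap e.symm.toLinearMap (by ext; simp)
  exact (hR.pi (ι := Fin n)).of_retract σ π hσ

end HomExact

universe u

section Homology

variable {R M P : Type*} {N : Type u} [Ring R] [AddCommGroup M] [Module R M] [AddCommGroup N]
  [Module R N] [AddCommGroup P] [Module R P] (f : M →ₗ[R] N) (g : N →ₗ[R] P)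

abbrev LinearMap.Homology : Type u :=
  ker g ⧸ (range f).comap (ker g).subtype

theorem Function.Exact.subsingleton_homology (hfg : Function.Exact f g) :
    Subsingleton (LinearMap.Homology f g) :=
  Submodule.Quotient.subsingleton_iff.mpr <|
    Submodule.comap_subtype_eq_top.mpr hfg.linearMap_ker_eq.le

variable {f g}

theorem LinearMap.Homology.hom_eq_zero_of_homExact {Z : Type u} [AddCommGroup Z] [Module R Z]
    [Module.Injective R Z] (hgf : g ∘ₗ f = 0) (hZ : HomExact Z f g)
    (φ : LinearMap.Homology f g →ₗ[R] Z) : φ = 0 := by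
  set K := (range f).comap (ker g).subtype
  obtain ⟨ψ, hψ⟩ := Module.Injective.out (ker g).subtype (Submodule.injective_subtype _)
    (φ ∘ₗ K.mkQ)
  have hψf : ψ ∘ₗ f = 0 := by
    ext y
    have hy : f y ∈ ker g := by simpa using congr($hgf y)
    calc ψ (f y) = φ (K.mkQ ⟨f y, hy⟩) := hψ ⟨f y, hy⟩
      _ = 0 := by rw [Submodule.mkQ_apply, (Submodule.Quotient.mk_eq_zero K).mpr ⟨y, rfl⟩, map_zero]
  obtain ⟨θ, rfl⟩ := (hZ ψ).mp hψf
  refine Submodule.linearMap_qext _ (ext fun x => ?_)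
  have hx : g x = 0 := x.2
  simpa [hx] using (hψ x).symm

end Homology

theorem hom_cohomology_to_projInjective_eq_zero_of_mem_LA_general
    (A : Type) [Ring A]
    (F : ℤ → Type) [∀ i, AddCommGroup (F i)] [∀ i, Module Aᵐᵒᵖ (F i)]
    (d : ∀ i : ℤ, F i →ₗ[Aᵐᵒᵖ] F (i + 1))
    (hd : ∀ i : ℤ, (d (i + 1)).comp (d i) = 0)
    -- `H^j(F) = 0` for all `j < 0` :
    (hL₁ : ∀ i : ℤ, i + 1 < 0 → Function.Exact (d i) (d (i + 1)))
    -- `H_j(F*) = 0` for all `j ≥ 0` :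
    (hL₂ : ∀ i : ℤ, 0 ≤ i + 1 →
      Function.Exact (fun φ : F (i + 1 + 1) →ₗ[Aᵐᵒᵖ] A => φ.comp (d (i + 1)))
        (fun φ : F (i + 1) →ₗ[Aᵐᵒᵖ] A => φ.comp (d i)))
    -- `Z` finitely generated projective-injective :
    (Z : Type) [AddCommGroup Z] [Module Aᵐᵒᵖ Z] [Module.Finite Aᵐᵒᵖ Z]
    (hZproj : Module.Projective Aᵐᵒᵖ Z) (hZinj : Module.Injective Aᵐᵒᵖ Z)
    (i : ℤ)
    (φ : (↥(LinearMap.ker (d (i + 1))) ⧸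
      (LinearMap.range (d i)).comap (LinearMap.ker (d (i + 1))).subtype) →ₗ[Aᵐᵒᵖ] Z) :
    φ = 0 := by
  rcases lt_or_ge (i + 1) 0 with hneg | hpos
  · have := (hL₁ i hneg).subsingleton_homology
    exact Subsingleton.elim φ 0
  · have hA : HomExact A (d i) (d (i + 1)) := hL₂ i hpos
    exact LinearMap.Homology.hom_eq_zero_of_homExact (hd i)
      (hA.of_projective (unopSelfLinearEquiv A)) φ

/-- Let `F` be a `ℤ`-indexed cochain complex of finitely generated projective right
`A`-modules which lies in the class `L_A`, i.e. `H^j(F) = 0` for all `j < 0` (expressed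
below at position `i+1` for all `i : ℤ` with `i+1 < 0`) and `H_j(F*) = 0` for all
`j ≥ 0`, i.e. `Hom_A(F^{j+1},A) → Hom_A(F^j,A) → Hom_A(F^{j-1},A)` is exact at the
middle for every `j ≥ 0` (expressed below at position `j = i+1`).  Then for every
position and every finitely generated projective-injective right `A`-module `Z`, every
`A`-homomorphism from the cohomology `H^{i+1}(F) = ker(d^{i+1})/im(d^i)` to `Z` is
zero. -/
theorem hom_cohomology_to_projInjective_eq_zero_of_mem_LA
    (k A : Type) [Field k] [Ring A] [Algebra k A] [FiniteDimensional k A]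
    (F : ℤ → Type) [∀ i, AddCommGroup (F i)] [∀ i, Module Aᵐᵒᵖ (F i)]
    [∀ i, Module.Finite Aᵐᵒᵖ (F i)]
    (hFproj : ∀ i, Module.Projective Aᵐᵒᵖ (F i))
    (d : ∀ i : ℤ, F i →ₗ[Aᵐᵒᵖ] F (i + 1))
    (hd : ∀ i : ℤ, (d (i + 1)).comp (d i) = 0)
    -- `H^j(F) = 0` for all `j < 0` :
    (hL₁ : ∀ i : ℤ, i + 1 < 0 → Function.Exact (d i) (d (i + 1)))
    -- `H_j(F*) = 0` for all `j ≥ 0` :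
    (hL₂ : ∀ i : ℤ, 0 ≤ i + 1 →
      Function.Exact (fun φ : F (i + 1 + 1) →ₗ[Aᵐᵒᵖ] A => φ.comp (d (i + 1)))
        (fun φ : F (i + 1) →ₗ[Aᵐᵒᵖ] A => φ.comp (d i)))
    -- `Z` finitely generated projective-injective :
    (Z : Type) [AddCommGroup Z] [Module Aᵐᵒᵖ Z] [Module.Finite Aᵐᵒᵖ Z]
    (hZproj : Module.Projective Aᵐᵒᵖ Z) (hZinj : Module.Injective Aᵐᵒᵖ Z)
    (i : ℤ)
    (φ : (↥(LinearMap.ker (d (i + 1))) ⧸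
      (LinearMap.range (d i)).comap (LinearMap.ker (d (i + 1))).subtype) →ₗ[Aᵐᵒᵖ] Z) :
    φ = 0 :=
  hom_cohomology_to_projInjective_eq_zero_of_mem_LA_general A F d hd hL₁ hL₂ Z hZproj hZinj i φ
end

section
/- Let Y be a finitely generated right A-module such that for every submodule Y' of Y and every submodule X of Y' with Y'/X simple, the short exact sequence 0 → X → Y' → Y'/X → 0 is perfect exact (equivalently, the restriction map Hom_A(Y',A) → Hom_A(X,A) is surjective). Then Hom_A(Y,A) = 0 if and only if Hom_A(S,A) = 0 for every composition factor S of Y, i.e., for every simple module S isomorphic to W/W' for submodules W' ⊆ W ⊆ Y. -/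
/-!
A finitely generated module over a finite-dimensional algebra has finite length. If `Y` has no
nonzero functional, then neither has any composition factor `W/W'`: by the hypothesis, a
functional on `W/W'` lifts to `W` and extends along a composition series of `Y` one simple
step at a time. Conversely, a nonzero `φ : Y → A` does not vanish on a submodule `W` covering
`ker φ`, so it induces a nonzero functional on the simple module `W / (W ∩ ker φ)`.
-/

section

variable {R M N : Type*} [Ring R] [AddCommGroup M] [Module R M] [AddCommGroup N] [Module R N]

theorem LinearMap.exists_extend_of_surjective_restrict_of_isSimpleModule
    [IsNoetherian R M] [IsArtinian R M]
    (h : ∀ (Y' : Submodule R M) (X : Submodule R Y'), IsSimpleModule R (Y' ⧸ X) →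
      Function.Surjective (fun φ : Y' →ₗ[R] N => φ.comp X.subtype))
    (V : Submodule R M) (ψ : V →ₗ[R] N) : ∃ Ψ : M →ₗ[R] N, Ψ.comp V.subtype = ψ := by
  induction V using IsNoetherian.induction with
  | _ V ih =>
    obtain rfl | hV := eq_or_ne V ⊤
    · exact ⟨ψ.comp (LinearEquiv.ofTop ⊤ rfl).symm.toLinearMap, rfl⟩
    obtain ⟨V₁, hcov, -⟩ := (lt_top_iff_ne_top.mpr hV).exists_covby_le
    obtain ⟨Φ, hΦ⟩ := h V₁ (V.comap V₁.subtype) ((covBy_iff_quot_is_simple hcov.le).mp hcov)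
      (ψ.comp (Submodule.comapSubtypeEquivOfLe hcov.le).toLinearMap)
    obtain ⟨Ψ, hΨ⟩ := ih V₁ hcov.lt Φ
    refine ⟨Ψ, LinearMap.ext fun v => ?_⟩
    have hv₁ : (v : M) ∈ V₁ := hcov.le v.2
    calc Ψ v = Φ ⟨v, hv₁⟩ := LinearMap.congr_fun hΨ ⟨v, hv₁⟩
      _ = ψ v := LinearMap.congr_fun hΦ ⟨⟨v, hv₁⟩, v.2⟩

theorem LinearMap.exists_isSimpleModule_subquotient_hom_ne_zero [IsArtinian R M]
    {φ : M →ₗ[R] N} (hφ : φ ≠ 0) :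
    ∃ (W : Submodule R M) (W' : Submodule R W),
      IsSimpleModule R (W ⧸ W') ∧ ∃ ψ : (W ⧸ W') →ₗ[R] N, ψ ≠ 0 := by
  have hker : LinearMap.ker φ < ⊤ := lt_top_iff_ne_top.mpr (mt LinearMap.ker_eq_top.mp hφ)
  obtain ⟨W, hcov, -⟩ := hker.exists_covby_le
  let W' := (LinearMap.ker φ).comap W.subtype
  have hle : W' ≤ LinearMap.ker (φ.comp W.subtype) := fun _ hx => hx
  refine ⟨W, W', (covBy_iff_quot_is_simple hcov.le).mp hcov, W'.liftQ _ hle, fun hzero => ?_⟩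
  refine hcov.lt.not_ge fun y hy => ?_
  simpa using LinearMap.congr_fun hzero (Submodule.Quotient.mk ⟨y, hy⟩)

end

/-- For a finitely generated right `A`-module `Y` such that for every submodule `Y'` of
`Y` and every submodule `X` of `Y'` with `Y'/X` simple the restriction map
`Hom_A(Y',A) → Hom_A(X,A)` is surjective (i.e. the short exact sequence
`0 → X → Y' → Y'/X → 0` is perfect exact), one has `Hom_A(Y,A) = 0` if and only if
`Hom_A(S,A) = 0` for every composition factor `S = W/W'` of `Y`, with `W' ⊆ W ⊆ Y`
submodules and `W/W'` simple. -/
theorem hom_eq_zero_iff_hom_compositionFactors_eq_zero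
    (k A : Type) [Field k] [Ring A] [Algebra k A] [FiniteDimensional k A]
    (Y : Type) [AddCommGroup Y] [Module Aᵐᵒᵖ Y] [Module.Finite Aᵐᵒᵖ Y]
    (h : ∀ (Y' : Submodule Aᵐᵒᵖ Y) (X : Submodule Aᵐᵒᵖ Y'),
      IsSimpleModule Aᵐᵒᵖ (Y' ⧸ X) →
      Function.Surjective (fun φ : Y' →ₗ[Aᵐᵒᵖ] A => φ.comp X.subtype)) :
    (∀ φ : Y →ₗ[Aᵐᵒᵖ] A, φ = 0) ↔
      (∀ (W : Submodule Aᵐᵒᵖ Y) (W' : Submodule Aᵐᵒᵖ W),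
        IsSimpleModule Aᵐᵒᵖ (W ⧸ W') → ∀ φ : (W ⧸ W') →ₗ[Aᵐᵒᵖ] A, φ = 0) := by
  have : IsArtinianRing Aᵐᵒᵖ := isArtinian_of_tower k inferInstance
  constructor
  · intro hzero W W' _ φ
    obtain ⟨Ψ, hΨ⟩ := LinearMap.exists_extend_of_surjective_restrict_of_isSimpleModule h W
      (φ.comp W'.mkQ)
    rw [hzero Ψ, LinearMap.zero_comp] at hΨ
    exact (LinearMap.cancel_right W'.mkQ_surjective).mp (by rw [← hΨ, LinearMap.zero_comp])
  · intro hcf φ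
    by_contra hφ
    obtain ⟨W, W', hS, ψ, hψ⟩ := LinearMap.exists_isSimpleModule_subquotient_hom_ne_zero hφ
    exact hψ (hcf W W' hS ψ)
end

section
/- Let S be a simple right A-module. Then Hom_A(S,A) ≠ 0 if and only if there exists a perfect exact sequence 0 → S → P → Z → 0 of finitely generated right A-modules with P projective. -/
/-! `Hom_A(S, A)` is finite-dimensional over `k`. If it is nonzero, every nonzero map out of
the simple module `S` is injective, so a finite `k`-spanning family `φ₁, …, φₙ` of
`Hom_A(S, A)` gives an embedding `S → Aⁿ` through which every map `S → A` factors; its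
cokernel sequence is perfect exact. Conversely, a projective `P` is a summand of a free
module, so the image of a nonzero `s ∈ S` is detected by a coordinate functional `P → A`. -/

open Function

namespace LinearMap

variable {R : Type*} [Ring R] {M N : Type*} [AddCommGroup M] [AddCommGroup N]
  [Module R M] [Module R N] (Q : Type*) [AddCommGroup Q] [Module R Q]

theorem exact_precomp_mkQ_range (f : M →ₗ[R] N) :
    Exact (fun φ : (N ⧸ range f) →ₗ[R] Q => φ.comp (range f).mkQ)
      (fun φ : N →ₗ[R] Q => φ.comp f) := by
  intro ψ
  constructor
  · intro hψ
    have hle : range f ≤ ker ψ := range_le_ker_iff.mpr hψ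
    exact ⟨(range f).liftQ ψ hle, (range f).liftQ_mkQ ψ hle⟩
  · rintro ⟨φ, rfl⟩
    exact (comp_assoc f _ φ).trans <| by
      rw [f.exact_map_mkQ_range.linearMap_comp_eq_zero, comp_zero]

variable {Q}

theorem injective_of_surjective_comp {f : M →ₗ[R] N}
    (hsep : ∀ x : M, x ≠ 0 → ∃ φ : M →ₗ[R] Q, φ x ≠ 0)
    (hfac : Surjective fun ψ : N →ₗ[R] Q => ψ.comp f) : Injective f := by
  refine (injective_iff_map_eq_zero f).mpr fun x hx => ?_
  by_contra hx0
  obtain ⟨φ, hφ⟩ := hsep x hx0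
  obtain ⟨ψ, rfl⟩ := hfac φ
  exact hφ (by simp [hx])

theorem surjective_comp_pi_of_span_eq_top (k : Type*) [Semiring k] [Module k Q]
    [SMulCommClass R k Q] {ι : Type*} [Fintype ι] [DecidableEq ι] {φ : ι → M →ₗ[R] Q}
    (hφ : Submodule.span k (Set.range φ) = ⊤) :
    Surjective fun ψ : (ι → Q) →ₗ[R] Q => ψ.comp (pi φ) := by
  intro χ
  obtain ⟨c, rfl⟩ :=
    (Submodule.mem_span_range_iff_exists_fun k).mp (hφ ▸ Submodule.mem_top (x := χ))
  refine ⟨∑ i, c i • proj i, ?_⟩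
  ext x
  simp

end LinearMap

theorem Module.Finite.finiteDimensional_linearMap (k : Type*) [Field k] {R M N : Type*} [Ring R]
    [AddCommGroup M] [Module R M] [Module.Finite R M] [AddCommGroup N] [Module R N]
    [Module k N] [SMulCommClass R k N] [FiniteDimensional k N] :
    FiniteDimensional k (M →ₗ[R] N) := by
  obtain ⟨n, π, hπ⟩ := Module.Finite.exists_fin' R M
  exact .of_injective (LinearMap.lcomp k N π) (LinearMap.lcomp_injective_of_surjective π hπ)

section RightModule

variable (A : Type) [Ring A] {X : Type} [AddCommGroup X] [Module Aᵐᵒᵖ X]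

instance : Module.Free Aᵐᵒᵖ A := .of_equiv (MulOpposite.opLinearEquiv Aᵐᵒᵖ).symm

instance : Module.Finite Aᵐᵒᵖ A := .equiv (MulOpposite.opLinearEquiv Aᵐᵒᵖ).symm

theorem isPerfectExactSeq_mkQ_range {Y : Type} [AddCommGroup Y] [Module Aᵐᵒᵖ Y]
    {f : X →ₗ[Aᵐᵒᵖ] Y} (hf : Injective f) (hfac : Surjective fun φ : Y →ₗ[Aᵐᵒᵖ] A => φ.comp f) :
    IsPerfectExactSeq A f (LinearMap.range f).mkQ :=
  ⟨⟨hf, f.exact_map_mkQ_range, Submodule.mkQ_surjective _⟩,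
    fun _ _ h => Submodule.linearMap_qext _ h, f.exact_precomp_mkQ_range A, hfac⟩

theorem exists_isPerfectExactSeq_pi_of_separating (k : Type) [Field k] [Algebra k A]
    [FiniteDimensional k A] [Module.Finite Aᵐᵒᵖ X]
    (hsep : ∀ x : X, x ≠ 0 → ∃ φ : X →ₗ[Aᵐᵒᵖ] A, φ x ≠ 0) :
    ∃ (n : ℕ) (f : X →ₗ[Aᵐᵒᵖ] (Fin n → A)), IsPerfectExactSeq A f (LinearMap.range f).mkQ := by
  have := Module.Finite.finiteDimensional_linearMap k (R := Aᵐᵒᵖ) (M := X) (N := A)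
  obtain ⟨n, φ, hφ⟩ := Module.Finite.exists_fin (R := k) (M := X →ₗ[Aᵐᵒᵖ] A)
  have hfac := LinearMap.surjective_comp_pi_of_span_eq_top k hφ
  exact ⟨n, _, isPerfectExactSeq_mkQ_range A
    (LinearMap.injective_of_surjective_comp hsep hfac) hfac⟩

theorem Module.Projective.exists_linearMap_apply_ne_zero [Module.Projective Aᵐᵒᵖ X] {x : X}
    (hx : x ≠ 0) : ∃ φ : X →ₗ[Aᵐᵒᵖ] A, φ x ≠ 0 := by
  obtain ⟨φ, hφ⟩ := Module.Projective.exists_dual_ne_zero Aᵐᵒᵖ hx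
  exact ⟨(MulOpposite.opLinearEquiv Aᵐᵒᵖ).symm.toLinearMap.comp φ, by simpa using hφ⟩

end RightModule

/-- `Hom_A(S,A) ≠ 0` for a simple right `A`-module `S` if and only if there exists a
perfect exact sequence `0 → S → P → Z → 0` of finitely generated right `A`-modules
with `P` projective. -/
theorem simple_hom_ne_zero_iff_exists_perfectExact_into_projective
    (k A : Type) [Field k] [Ring A] [Algebra k A] [FiniteDimensional k A]
    (S : Type) [AddCommGroup S] [Module Aᵐᵒᵖ S] [Module.Finite Aᵐᵒᵖ S]
    (hS : IsSimpleModule Aᵐᵒᵖ S) :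
    (∃ φ : S →ₗ[Aᵐᵒᵖ] A, φ ≠ 0) ↔
      (∃ (P Z : Type) (_ : AddCommGroup P) (_ : AddCommGroup Z)
        (_ : Module Aᵐᵒᵖ P) (_ : Module Aᵐᵒᵖ Z),
        Module.Finite Aᵐᵒᵖ P ∧ Module.Finite Aᵐᵒᵖ Z ∧ Module.Projective Aᵐᵒᵖ P ∧
        ∃ (f : S →ₗ[Aᵐᵒᵖ] P) (g : P →ₗ[Aᵐᵒᵖ] Z), IsPerfectExactSeq A f g) := by
  have := IsSimpleModule.nontrivial Aᵐᵒᵖ S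
  constructor
  · rintro ⟨φ, hφ⟩
    have hsep (x : S) (hx : x ≠ 0) : ∃ φ : S →ₗ[Aᵐᵒᵖ] A, φ x ≠ 0 :=
      ⟨φ, fun h => hx (LinearMap.injective_of_ne_zero hφ (by rw [h, map_zero]))⟩
    obtain ⟨n, f, hf⟩ := exists_isPerfectExactSeq_pi_of_separating A k hsep
    exact ⟨_, _, _, _, _, _, inferInstance, inferInstance, inferInstance, f, _, hf⟩
  · rintro ⟨P, Z, _, _, _, _, -, -, _, f, g, ⟨⟨hf, -⟩, -⟩⟩
    obtain ⟨s, hs⟩ := exists_ne (0 : S)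
    obtain ⟨φ, hφ⟩ := Module.Projective.exists_linearMap_apply_ne_zero A
      ((injective_iff_map_eq_zero' f).mp hf s |>.not.mpr hs)
    exact ⟨φ.comp f, fun h => hφ (LinearMap.congr_fun h s)⟩
end
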